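/- Let (X_i) be a centered Gaussian vector with positive definite covariance Γ, partitioned into components X_A and X_M. For any vector u supported on M, letting Y = u^T X_M and P_A Y the orthogonal (L²) projection of Y onto the span of (X_i)_{i∈A}, the mean squared prediction error satisfies E[(P_A Y − Y)²] = u^T (Λ_M)^{-1} u where Λ = Γ^{-1}. -/

import Mathlib

/-!
The residual is the linear combination `cᵀX` with `c = (Γ_A⁻¹ Γ_{AM} u, -u)`, so its second
moment is the quadratic form `cᵀ Γ c`. The choice of the `A`-part of `c` makes the `A`-block of
`Γ c` vanish, and the form collapses to `uᵀ (Γ_M - Γ_{MA} Γ_A⁻¹ Γ_{AM}) u`: the Schur complement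
of `Γ_A`, which is the inverse of the `M`-block of `Γ⁻¹`.
-/

open Matrix MeasureTheory

theorem integral_sq_sum_mul_eq_dotProduct_mulVec {Ω ι : Type*} [MeasurableSpace Ω]
    [Fintype ι] (μ : Measure Ω) (X : ι → Ω → ℝ)
    (hint : ∀ i j, Integrable (fun ω => X i ω * X j ω) μ) (Γ : Matrix ι ι ℝ)
    (hcov : ∀ i j, ∫ ω, X i ω * X j ω ∂μ = Γ i j) (c : ι → ℝ) :
    ∫ ω, (∑ k, c k * X k ω) ^ 2 ∂μ = c ⬝ᵥ (Γ *ᵥ c) := by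
  have hexpand : ∀ ω, (∑ k, c k * X k ω) ^ 2 = ∑ k, ∑ l, c k * c l * (X k ω * X l ω) := by
    intro ω
    rw [sq, Finset.sum_mul_sum]
    congr! 2 with k _ l _
    ring
  have hint' : ∀ k l, Integrable (fun ω => c k * c l * (X k ω * X l ω)) μ :=
    fun k l => (hint k l).const_mul _
  simp_rw [hexpand]
  rw [integral_finsetSum _ fun k _ => integrable_finsetSum _ fun l _ => hint' k l]
  simp_rw [integral_finsetSum _ fun l _ => hint' _ l, integral_const_mul, hcov]
  simp only [dotProduct, mulVec, Finset.mul_sum]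
  congr! 2 with k _ l _
  ring

namespace Matrix

variable {α m n : Type*} [CommRing α] [Fintype m] [Fintype n] [DecidableEq m]

theorem inv_toBlocks₂₂_inv [DecidableEq n] (M : Matrix (m ⊕ n) (m ⊕ n) α) (hM : IsUnit M.det)
    (hA : IsUnit M.toBlocks₁₁.det) :
    (M⁻¹.toBlocks₂₂)⁻¹ = M.toBlocks₂₂ - M.toBlocks₂₁ * M.toBlocks₁₁⁻¹ * M.toBlocks₁₂ := by
  obtain ⟨A, B, C, D, rfl⟩ : ∃ A B C D, M = fromBlocks A B C D :=
    ⟨_, _, _, _, (fromBlocks_toBlocks M).symm⟩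
  simp only [toBlocks_fromBlocks₁₁, toBlocks_fromBlocks₁₂, toBlocks_fromBlocks₂₁,
    toBlocks_fromBlocks₂₂] at hA ⊢
  let := invertibleOfIsUnitDet A hA
  let := invertibleOfIsUnitDet _ hM
  let := invertibleOfFromBlocks₁₁Invertible A B C D
  rw [← invOf_eq_nonsing_inv (fromBlocks A B C D), invOf_fromBlocks₁₁_eq, toBlocks_fromBlocks₂₂,
    invOf_eq_nonsing_inv, inv_inv_of_invertible, invOf_eq_nonsing_inv]

theorem sumElim_dotProduct_mulVec_sumElim_eq_schur (M : Matrix (m ⊕ n) (m ⊕ n) α)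
    (hA : IsUnit M.toBlocks₁₁.det) (u : n → α) :
    Sum.elim (M.toBlocks₁₁⁻¹ *ᵥ (M.toBlocks₁₂ *ᵥ u)) (-u) ⬝ᵥ
        (M *ᵥ Sum.elim (M.toBlocks₁₁⁻¹ *ᵥ (M.toBlocks₁₂ *ᵥ u)) (-u)) =
      u ⬝ᵥ ((M.toBlocks₂₂ - M.toBlocks₂₁ * M.toBlocks₁₁⁻¹ * M.toBlocks₁₂) *ᵥ u) := by
  obtain ⟨A, B, C, D, rfl⟩ : ∃ A B C D, M = fromBlocks A B C D :=
    ⟨_, _, _, _, (fromBlocks_toBlocks M).symm⟩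
  simp only [toBlocks_fromBlocks₁₁, toBlocks_fromBlocks₁₂, toBlocks_fromBlocks₂₁,
    toBlocks_fromBlocks₂₂] at hA ⊢
  have hAv : A *ᵥ (A⁻¹ *ᵥ (B *ᵥ u)) = B *ᵥ u := by
    rw [mulVec_mulVec, mul_nonsing_inv _ hA, one_mulVec]
  rw [fromBlocks_mulVec, Sum.elim_comp_inl, Sum.elim_comp_inr, sumElim_dotProduct_sumElim,
    hAv, mulVec_neg, mulVec_neg, add_neg_cancel, dotProduct_zero, zero_add, mulVec_mulVec,
    mulVec_mulVec, sub_mulVec, dotProduct_sub, neg_dotProduct, dotProduct_add, dotProduct_neg,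
    Matrix.mul_assoc]
  ring

end Matrix

theorem prediction_error_eq_inv_precision_block_general {a m : ℕ}
    {Ω : Type*} [MeasurableSpace Ω] (ℙ : Measure Ω)
    (X : (Fin a ⊕ Fin m) → Ω → ℝ)
    (hint : ∀ i j, Integrable (fun ω => X i ω * X j ω) ℙ)
    (Γ : Matrix (Fin a ⊕ Fin m) (Fin a ⊕ Fin m) ℝ)
    (hΓ : Γ.PosDef)
    (hcov : ∀ i j, ∫ ω, X i ω * X j ω ∂ℙ = Γ i j)
    (u : Fin m → ℝ) :
    -- the orthogonal projection of `Y = uᵀ X_M` onto the span of `(X_i)_{i ∈ A}`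
    -- has coefficient vector `v = Γ_A⁻¹ Γ_{AM} u`
    (∫ ω, ((∑ i, ((Γ.toBlocks₁₁)⁻¹ *ᵥ (Γ.toBlocks₁₂ *ᵥ u)) i * X (Sum.inl i) ω)
        - (∑ j, u j * X (Sum.inr j) ω)) ^ 2 ∂ℙ)
      = u ⬝ᵥ ((Γ⁻¹.toBlocks₂₂)⁻¹ *ᵥ u) := by
  have hA : IsUnit Γ.toBlocks₁₁.det := (hΓ.submatrix Sum.inl_injective).det_pos.ne'.isUnit
  have hresidual : ∀ (v : Fin a → ℝ) ω, (∑ i, v i * X (Sum.inl i) ω) - ∑ j, u j * X (Sum.inr j) ω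
      = ∑ k, Sum.elim v (-u) k * X k ω := by
    intro v ω
    simp [Fintype.sum_sum_type, sub_eq_add_neg]
  simp_rw [hresidual]
  rw [integral_sq_sum_mul_eq_dotProduct_mulVec ℙ X hint Γ hcov,
    sumElim_dotProduct_mulVec_sumElim_eq_schur Γ hA,
    inv_toBlocks₂₂_inv Γ hΓ.det_pos.ne'.isUnit hA]

/-- Mean squared prediction error of the best linear (orthogonal / L²) prediction of a
linear functional `Y = uᵀ X_M` of a centered Gaussian vector given the coordinates
`X_A`, expressed through the inverse of the precision-matrix block:
`E[(P_A Y − Y)²] = uᵀ (Λ_M)⁻¹ u` where `Λ = Γ⁻¹`. -/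
theorem prediction_error_eq_inv_precision_block {a m : ℕ}
    {Ω : Type*} [MeasurableSpace Ω] (ℙ : Measure Ω) [IsProbabilityMeasure ℙ]
    (X : (Fin a ⊕ Fin m) → Ω → ℝ)
    (hmeas : ∀ i, Measurable (X i))
    (hint : ∀ i j, Integrable (fun ω => X i ω * X j ω) ℙ)
    (Γ : Matrix (Fin a ⊕ Fin m) (Fin a ⊕ Fin m) ℝ)
    (hΓ : Γ.PosDef)
    (hcentered : ∀ i, ∫ ω, X i ω ∂ℙ = 0)
    (hcov : ∀ i j, ∫ ω, X i ω * X j ω ∂ℙ = Γ i j)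
    (u : Fin m → ℝ) :
    -- the orthogonal projection of `Y = uᵀ X_M` onto the span of `(X_i)_{i ∈ A}`
    -- has coefficient vector `v = Γ_A⁻¹ Γ_{AM} u`
    (∫ ω, ((∑ i, ((Γ.toBlocks₁₁)⁻¹ *ᵥ (Γ.toBlocks₁₂ *ᵥ u)) i * X (Sum.inl i) ω)
        - (∑ j, u j * X (Sum.inr j) ω)) ^ 2 ∂ℙ)
      = u ⬝ᵥ ((Γ⁻¹.toBlocks₂₂)⁻¹ *ᵥ u) :=
  prediction_error_eq_inv_precision_block_general ℙ X hint Γ hΓ hcov u
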